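/- Let {R_{i_1}+u_1, ..., R_{i_t}+u_t} be an admissible family of components of the q-ary Hamming code H_{q,m} of length n = (q^m−1)/(q−1) (i.e., the cosets are pairwise disjoint, each R_{i_s} being the principal i_s-component and u_s ∈ H_{q,m}), and let σ_1,...,σ_t be permutations of F_q. Then C = (H_{q,m} \ ∪_s (R_{i_s}+u_s)) ∪ (∪_s σ_s(R_{i_s}+u_s)) is a q-ary 1-perfect code of length n. -/

import Mathlib

/-!
If `y - x` is a codeword outside `R_i ⊔ R_{i'}`, then `x` and `y` differ in at least three
coordinates other than `i` and `i'`, so switching `x` at `i` and `y` at `i'` keeps them at distance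
at least 3. Indeed a weight-3 codeword with a nonzero entry at `i` lies in `R_i`, and a weight-4
codeword with nonzero entries at `i ≠ i'` splits into a weight-3 codeword through `i` plus one
through `i'`, because every nonzero syndrome is a multiple of a column. Disjointness of
`R_i + u` and `R_{i'} + u'` (or `y ∉ R_i + u`) is what keeps `y - x` out of `R_i ⊔ R_{i'}`.
The size is unchanged since each `σ_s` permutes the alphabet and the switched cosets stay
pairwise disjoint and disjoint from the untouched codewords.
-/

variable {F : Type*} [Field F] [Fintype F] [DecidableEq F] {m n : ℕ}

/-- The linear code with parity-check columns `h`. -/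
def parityCheckCode (h : Fin n → Fin m → F) : Submodule F (Fin n → F) where
  carrier := {x | ∑ j, x j • h j = 0}
  add_mem' := by
    intro a b ha hb
    simp only [Set.mem_setOf_eq, Pi.add_apply, add_smul, Finset.sum_add_distrib] at *
    simp [ha, hb]
  zero_mem' := by simp
  smul_mem' := by
    intro c a ha
    simp only [Set.mem_setOf_eq, Pi.smul_apply, smul_eq_mul, mul_smul] at *
    rw [← Finset.smul_sum, ha, smul_zero]

/-- The submodule of vectors supported inside the coordinate set `l`. -/
def supportedIn (l : Set (Fin n)) : Submodule F (Fin n → F) where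
  carrier := {u | ∀ j ∉ l, u j = 0}
  add_mem' := by intro a b ha hb j hj; simp [ha j hj, hb j hj]
  zero_mem' := by intro j hj; simp
  smul_mem' := by intro c a ha j hj; simp [ha j hj]

/-- The principal `i`-component `R_i`: span of all triples (codewords of
weight 3) with a `1` in coordinate `i`. -/
def principalComponent (h : Fin n → Fin m → F) (i : Fin n) : Submodule F (Fin n → F) :=
  Submodule.span F {u | u ∈ parityCheckCode h ∧ hammingNorm u = 3 ∧ u i = 1}

/-- The line of `PG_{m−1}(q)` through the points `a` and `b`, viewed as a set
of coordinates: `k` is on the line iff `h_k` is in the span of `h_a, h_b`. -/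
def lineThrough (h : Fin n → Fin m → F) (a b : Fin n) : Set (Fin n) :=
  {k | h k ∈ Submodule.span F {h a, h b}}

/-- Apply the permutation `σ` of the alphabet to the `i`-th coordinate. -/
def applyAt (i : Fin n) (σ : Equiv.Perm F) (x : Fin n → F) : Fin n → F :=
  Function.update x i (σ (x i))

/-- The coset `R_i + u` of the principal `i`-component, as a set. -/
def componentCoset (h : Fin n → Fin m → F) (i : Fin n) (u : Fin n → F) :
    Set (Fin n → F) :=
  {w | ∃ r ∈ principalComponent h i, w = r + u}

open Finset

theorem hammingNorm_le_card_insert_of_forall_ne {ι : Type*} [Fintype ι] [DecidableEq ι]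
    {β : ι → Type*} [∀ i, Zero (β i)] [∀ i, DecidableEq (β i)] {x y : ∀ i, β i} {j : ι}
    (hxy : ∀ k ≠ j, x k = y k) :
    hammingNorm x ≤ #(insert j ({k | y k ≠ 0} : Finset ι)) := by
  refine card_le_card fun k hk => ?_
  by_cases hkj : k = j
  · simp [hkj]
  · simp_all

section ApplyAt

variable {α : Type*}

theorem applyAt_apply_of_ne {i k : Fin n} (hk : k ≠ i) (σ : Equiv.Perm α) (x : Fin n → α) :
    applyAt i σ x k = x k :=
  Function.update_of_ne hk _ _

@[simp]
theorem applyAt_one (i : Fin n) (x : Fin n → α) : applyAt i 1 x = x :=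
  Function.update_eq_self i x

theorem hammingDist_applyAt [DecidableEq α] (i : Fin n) (σ : Equiv.Perm α) (x y : Fin n → α) :
    hammingDist (applyAt i σ x) (applyAt i σ y) = hammingDist x y := by
  have hcomp (z : Fin n → α) :
      applyAt i σ z = fun k => (if k = i then ⇑σ else id) (z k) := by
    funext k
    by_cases hk : k = i
    · subst hk; simp [applyAt]
    · simp [applyAt_apply_of_ne hk, hk]
  rw [hcomp, hcomp, hammingDist_comp]
  intro k
  split_ifs
  exacts [σ.injective, Function.injective_id]

theorem applyAt_injective [DecidableEq α] (i : Fin n) (σ : Equiv.Perm α) :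
    Function.Injective (applyAt i σ) := fun x y hxy => by
  rw [← hammingDist_eq_zero, ← hammingDist_applyAt i σ, hxy, hammingDist_self]

end ApplyAt

section LinearCode

variable {K : Type*} [Field K] {h : Fin n → Fin m → K}

theorem parityCheckCode_eq_ker :
    parityCheckCode h = LinearMap.ker (Fintype.linearCombination K h) :=
  Submodule.ext fun _ => Iff.rfl

theorem surjective_linearCombination
    (hcover : ∀ z : Fin m → K, z ≠ 0 → ∃ j, ∃ c : K, z = c • h j) :
    Function.Surjective (Fintype.linearCombination K h) := by
  classical
  intro z
  by_cases hz : z = 0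
  · exact ⟨0, by simp [hz]⟩
  obtain ⟨j, c, rfl⟩ := hcover z hz
  exact ⟨Pi.single j c, by simp⟩

theorem card_parityCheckCode [Fintype K]
    (hcover : ∀ z : Fin m → K, z ≠ 0 → ∃ j, ∃ c : K, z = c • h j) :
    Nat.card (parityCheckCode h) = Fintype.card K ^ (n - m) := by
  have hrank := LinearMap.finrank_range_add_finrank_ker (Fintype.linearCombination K h)
  rw [LinearMap.range_eq_top.mpr (surjective_linearCombination hcover), finrank_top,
    Module.finrank_fin_fun, Module.finrank_fin_fun] at hrank
  rw [parityCheckCode_eq_ker, Module.natCard_eq_pow_finrank (K := K), Nat.card_eq_fintype_card]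
  congr
  omega

end LinearCode

def switchedCode {K : Type*} [Field K] [DecidableEq K] {ι : Type*}
    (h : Fin n → Fin m → K) (idx : ι → Fin n) (u : ι → Fin n → K)
    (σ : ι → Equiv.Perm K) : Set (Fin n → K) :=
  ((parityCheckCode h : Set (Fin n → K)) \ ⋃ s, componentCoset h (idx s) (u s)) ∪
    ⋃ s, applyAt (idx s) (σ s) '' componentCoset h (idx s) (u s)

section HammingCode

variable {K : Type*} [Field K] [DecidableEq K] {h : Fin n → Fin m → K}

theorem three_le_hammingNorm_of_mem (hnz : ∀ j, h j ≠ 0)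
    (hnp : ∀ j k, j ≠ k → ∀ c : K, h j ≠ c • h k) {v : Fin n → K}
    (hv : v ∈ parityCheckCode h) (hv0 : v ≠ 0) : 3 ≤ hammingNorm v := by
  by_contra! hlt
  set S : Finset (Fin n) := {k | v k ≠ 0}
  have hind : LinearIndepOn K h (S : Set (Fin n)) := by
    change #S < 3 at hlt
    interval_cases hS : #S
    · simp [card_eq_zero.mp hS]
    · obtain ⟨a, ha⟩ := card_eq_one.mp hS
      simpa [ha] using hnz a
    · obtain ⟨a, b, hab, hSab⟩ := card_eq_two.mp hS
      rw [hSab, coe_pair, linearIndepOn_pair_iff h hab (hnz a)]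
      exact fun c => (hnp b a hab.symm c).symm
  have hsum : ∑ k ∈ S, v k • h k = 0 := by
    rw [sum_filter_of_ne fun k _ hk => left_ne_zero_of_smul hk]
    exact hv
  have hzero := linearIndepOn_iff'.mp hind S v subset_rfl hsum
  exact hv0 (funext fun k => by_contra fun hk => hk (hzero k (by simpa [S] using hk)))

theorem three_le_hammingDist_of_mem
    (hmin : ∀ v ∈ parityCheckCode h, v ≠ 0 → 3 ≤ hammingNorm v) {x y : Fin n → K}
    (hx : x ∈ parityCheckCode h) (hy : y ∈ parityCheckCode h) (hxy : x ≠ y) :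
    3 ≤ hammingDist x y := by
  rw [hammingDist_eq_hammingNorm, neg_add_eq_sub]
  exact hmin _ ((parityCheckCode h).sub_mem hy hx) (sub_ne_zero.mpr hxy.symm)

theorem principalComponent_le_parityCheckCode (i : Fin n) :
    principalComponent h i ≤ parityCheckCode h :=
  Submodule.span_le.mpr fun _ hx => hx.1

theorem mem_principalComponent_of_hammingNorm_eq_three {i : Fin n} {v : Fin n → K}
    (hv : v ∈ parityCheckCode h) (h3 : hammingNorm v = 3) (hvi : v i ≠ 0) :
    v ∈ principalComponent h i := by
  rw [← Submodule.smul_mem_iff _ (inv_ne_zero hvi)]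
  refine Submodule.subset_span ⟨(parityCheckCode h).smul_mem _ hv, ?_, inv_mul_cancel₀ hvi⟩
  rwa [hammingNorm_smul fun _ => (isUnit_iff_ne_zero.mpr (inv_ne_zero hvi)).isSMulRegular _]

/-- `x` has weight exactly 3 and `j` lies outside the support of `p`, so `x i = p i ≠ 0`. -/
theorem mem_principalComponent_of_forall_ne
    (hmin : ∀ v ∈ parityCheckCode h, v ≠ 0 → 3 ≤ hammingNorm v) {x p : Fin n → K} {i j : Fin n}
    (hx : x ∈ parityCheckCode h) (hp : hammingNorm p = 2) (hpi : p i ≠ 0)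
    (hxp : ∀ k ≠ j, x k = p k) : x ∈ principalComponent h i := by
  have hx0 : x ≠ 0 := by
    rintro rfl
    have : hammingNorm p ≤ 1 := by
      simpa using hammingNorm_le_card_insert_of_forall_ne (y := (0 : Fin n → K)) (j := j)
        fun k hk => (hxp k hk).symm
    omega
  have hj : j ∉ ({k | p k ≠ 0} : Finset (Fin n)) := by
    intro hj
    have := hammingNorm_le_card_insert_of_forall_ne hxp
    rw [insert_eq_of_mem hj] at this
    change hammingNorm x ≤ hammingNorm p at this
    have := hmin x hx hx0
    omega
  have hji : j ≠ i := by
    rintro rfl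
    simp [hpi] at hj
  have hx3 : hammingNorm x ≤ 3 := by
    refine (hammingNorm_le_card_insert_of_forall_ne hxp).trans ?_
    rw [card_insert_of_notMem hj]
    change hammingNorm p + 1 ≤ 3
    omega
  refine mem_principalComponent_of_hammingNorm_eq_three hx (le_antisymm hx3 (hmin x hx hx0)) ?_
  rwa [hxp i hji.symm]

/-- The weight-4 codeword `v` splits as `w + (v - w)` where `w` agrees with `v` on two support
points `i, a` and has one more nonzero entry, at the point `j` with `h_j ∝ v_i h_i + v_a h_a`. -/
theorem mem_sup_principalComponent_of_hammingNorm_eq_four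
    (hmin : ∀ v ∈ parityCheckCode h, v ≠ 0 → 3 ≤ hammingNorm v)
    (hcover : ∀ z : Fin m → K, z ≠ 0 → ∃ j, ∃ c : K, z = c • h j)
    {v : Fin n → K} (hv : v ∈ parityCheckCode h) (h4 : hammingNorm v = 4) {i i' : Fin n}
    (hii' : i ≠ i') (hvi : v i ≠ 0) (hvi' : v i' ≠ 0) :
    v ∈ principalComponent h i ⊔ principalComponent h i' := by
  set S : Finset (Fin n) := {k | v k ≠ 0}
  obtain ⟨a, ha⟩ : (S \ {i, i'}).Nonempty := by
    rw [← card_pos, card_sdiff]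
    have : #({i, i'} ∩ S) ≤ 2 := (card_le_card inter_subset_left).trans card_le_two
    change 0 < hammingNorm v - _
    omega
  simp only [mem_sdiff, mem_insert, mem_singleton, not_or, S, mem_filter, mem_univ,
    true_and] at ha
  obtain ⟨hva, hai, hai'⟩ := ha
  set p : Fin n → K := fun k => if k = i ∨ k = a then v k else 0
  have hp : hammingNorm p = 2 := by
    have : ({k | p k ≠ 0} : Finset (Fin n)) = {i, a} := by
      ext k; by_cases hki : k = i <;> by_cases hka : k = a <;> simp_all [p]
    rw [hammingNorm, this, card_pair (Ne.symm hai)]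
  have hq : hammingNorm (v - p) = 2 := by
    have : ({k | (v - p) k ≠ 0} : Finset (Fin n)) = S \ {i, a} := by
      ext k; by_cases hki : k = i <;> by_cases hka : k = a <;> simp_all [p, S]
    rw [hammingNorm, this, card_sdiff_of_subset (by simp [insert_subset_iff, S, hvi, hva]),
      card_pair (Ne.symm hai)]
    change hammingNorm v - 2 = 2
    omega
  have hpH : Fintype.linearCombination K h p ≠ 0 := fun hp0 =>
    absurd (hmin p hp0 fun hp0' => by simp [hp0'] at hp) (by omega)
  obtain ⟨j, c, hjc⟩ := hcover _ hpH
  set w := p - Pi.single j c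
  have hw : w ∈ parityCheckCode h := by
    rw [parityCheckCode_eq_ker, LinearMap.mem_ker, map_sub, hjc]
    simp
  refine Submodule.mem_sup.mpr ⟨w, ?_, v - w, ?_, add_sub_cancel w v⟩
  · exact mem_principalComponent_of_forall_ne (j := j) hmin hw hp (by simp [p, hvi])
      fun k hk => by simp [w, hk]
  · refine mem_principalComponent_of_forall_ne (j := j) hmin ((parityCheckCode h).sub_mem hv hw) hq
      (by simp [p, hvi', hii'.symm, Ne.symm hai']) fun k hk => by simp [w, hk]

theorem three_le_card_support_sdiff
    (hmin : ∀ v ∈ parityCheckCode h, v ≠ 0 → 3 ≤ hammingNorm v)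
    (hcover : ∀ z : Fin m → K, z ≠ 0 → ∃ j, ∃ c : K, z = c • h j)
    {v : Fin n → K} (hv : v ∈ parityCheckCode h) {i i' : Fin n}
    (hvR : v ∉ principalComponent h i ⊔ principalComponent h i') :
    3 ≤ #(({k | v k ≠ 0} : Finset (Fin n)) \ {i, i'}) := by
  set S : Finset (Fin n) := {k | v k ≠ 0}
  have hS : 3 ≤ #S := hmin v hv fun hv0 => hvR (hv0 ▸ zero_mem _)
  have hpair : #({i, i'} ∩ S) ≤ 2 := (card_le_card inter_subset_left).trans card_le_two
  rw [card_sdiff]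
  by_cases h0 : v i = 0 ∧ v i' = 0
  · have : {i, i'} ∩ S = ∅ := by
      ext k
      simp only [mem_inter, mem_insert, mem_singleton, mem_filter, mem_univ, true_and,
        notMem_empty, iff_false, not_and, not_not, S]
      rintro (rfl | rfl) <;> simp [h0]
    rw [this, card_empty]
    omega
  have h4 : 4 ≤ #S := by
    refine lt_of_le_of_ne hS fun h3 => hvR ?_
    rcases not_and_or.mp h0 with hi | hi'
    · exact Submodule.mem_sup_left (mem_principalComponent_of_hammingNorm_eq_three hv h3.symm hi)
    · exact Submodule.mem_sup_right (mem_principalComponent_of_hammingNorm_eq_three hv h3.symm hi')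
  by_cases h1 : #({i, i'} ∩ S) ≤ 1
  · omega
  have hsub : {i, i'} ⊆ S :=
    inter_eq_left.mp (eq_of_subset_of_card_le inter_subset_left (card_le_two.trans (by omega)))
  have hii' : i ≠ i' := by
    rintro rfl
    exact h1 ((card_le_card inter_subset_left).trans (by simp))
  have h5 : 5 ≤ #S := lt_of_le_of_ne h4 fun h4' => hvR
    (mem_sup_principalComponent_of_hammingNorm_eq_four hmin hcover hv h4'.symm hii'
      (by simpa [S] using hsub (mem_insert_self i {i'}))
      (by simpa [S] using hsub (mem_insert_of_mem (mem_singleton_self i'))))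
  omega

theorem componentCoset_subset_parityCheckCode {i : Fin n} {u : Fin n → K}
    (hu : u ∈ parityCheckCode h) :
    componentCoset h i u ⊆ (parityCheckCode h : Set (Fin n → K)) := by
  rintro _ ⟨r, hr, rfl⟩
  exact (parityCheckCode h).add_mem (principalComponent_le_parityCheckCode i hr) hu

theorem add_mem_componentCoset {i : Fin n} {u x r : Fin n → K} (hx : x ∈ componentCoset h i u)
    (hr : r ∈ principalComponent h i) : x + r ∈ componentCoset h i u := by
  obtain ⟨r', hr', rfl⟩ := hx
  exact ⟨r' + r, add_mem hr' hr, by abel⟩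

theorem sub_notMem_principalComponent {i : Fin n} {u x y : Fin n → K}
    (hx : x ∈ componentCoset h i u) (hy : y ∉ componentCoset h i u) :
    y - x ∉ principalComponent h i := fun hyx =>
  hy (by simpa using add_mem_componentCoset hx hyx)

theorem sub_notMem_sup_of_disjoint {i i' : Fin n} {u u' x y : Fin n → K}
    (hd : Disjoint (componentCoset h i u) (componentCoset h i' u'))
    (hx : x ∈ componentCoset h i u) (hy : y ∈ componentCoset h i' u') :
    y - x ∉ principalComponent h i ⊔ principalComponent h i' := by
  intro hyx
  obtain ⟨r, hr, r', hr', hrr'⟩ := Submodule.mem_sup.mp hyx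
  have hxy : x + r = y + -r' := by
    rw [eq_add_of_sub_eq' hrr'.symm]
    abel
  exact Set.disjoint_left.mp hd (add_mem_componentCoset hx hr)
    (hxy ▸ add_mem_componentCoset hy (neg_mem hr'))

theorem three_le_hammingDist_applyAt
    (hmin : ∀ v ∈ parityCheckCode h, v ≠ 0 → 3 ≤ hammingNorm v)
    (hcover : ∀ z : Fin m → K, z ≠ 0 → ∃ j, ∃ c : K, z = c • h j)
    {x y : Fin n → K} {i i' : Fin n} (hyx : y - x ∈ parityCheckCode h)
    (hR : y - x ∉ principalComponent h i ⊔ principalComponent h i') (σ σ' : Equiv.Perm K) :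
    3 ≤ hammingDist (applyAt i σ x) (applyAt i' σ' y) := by
  refine (three_le_card_support_sdiff hmin hcover hyx hR).trans (card_le_card fun k hk => ?_)
  simp only [mem_sdiff, mem_insert, mem_singleton, not_or, mem_filter, mem_univ, true_and,
    Pi.sub_apply, sub_ne_zero] at hk
  obtain ⟨hxy, hki, hki'⟩ := hk
  simpa [applyAt_apply_of_ne hki, applyAt_apply_of_ne hki'] using Ne.symm hxy

section SwitchedCode

variable {ι : Type*} {idx : ι → Fin n} {u : ι → Fin n → K}

theorem three_le_hammingDist_applyAt_of_mem_sdiff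
    (hmin : ∀ v ∈ parityCheckCode h, v ≠ 0 → 3 ≤ hammingNorm v)
    (hcover : ∀ z : Fin m → K, z ≠ 0 → ∃ j, ∃ c : K, z = c • h j)
    (hu : ∀ s, u s ∈ parityCheckCode h) {s : ι} {x y : Fin n → K}
    (hx : x ∈ componentCoset h (idx s) (u s))
    (hy : y ∈ (parityCheckCode h : Set (Fin n → K)) \ ⋃ s, componentCoset h (idx s) (u s))
    (σ : Equiv.Perm K) : 3 ≤ hammingDist (applyAt (idx s) σ x) y := by
  have hyx := (parityCheckCode h).sub_mem hy.1 (componentCoset_subset_parityCheckCode (hu s) hx)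
  have hR : y - x ∉ principalComponent h (idx s) ⊔ principalComponent h (idx s) := by
    rw [sup_idem]
    exact sub_notMem_principalComponent hx fun hy' => hy.2 (Set.mem_iUnion_of_mem s hy')
  simpa using three_le_hammingDist_applyAt hmin hcover hyx hR σ 1

theorem three_le_hammingDist_applyAt_of_disjoint
    (hmin : ∀ v ∈ parityCheckCode h, v ≠ 0 → 3 ≤ hammingNorm v)
    (hcover : ∀ z : Fin m → K, z ≠ 0 → ∃ j, ∃ c : K, z = c • h j)
    {i i' : Fin n} {u u' x y : Fin n → K} (hu : u ∈ parityCheckCode h)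
    (hu' : u' ∈ parityCheckCode h)
    (hd : Disjoint (componentCoset h i u) (componentCoset h i' u'))
    (hx : x ∈ componentCoset h i u) (hy : y ∈ componentCoset h i' u') (σ σ' : Equiv.Perm K) :
    3 ≤ hammingDist (applyAt i σ x) (applyAt i' σ' y) :=
  three_le_hammingDist_applyAt hmin hcover
    ((parityCheckCode h).sub_mem (componentCoset_subset_parityCheckCode hu' hy)
      (componentCoset_subset_parityCheckCode hu hx))
    (sub_notMem_sup_of_disjoint hd hx hy) σ σ'

theorem three_le_hammingDist_of_mem_switchedCode
    (hmin : ∀ v ∈ parityCheckCode h, v ≠ 0 → 3 ≤ hammingNorm v)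
    (hcover : ∀ z : Fin m → K, z ≠ 0 → ∃ j, ∃ c : K, z = c • h j)
    (hu : ∀ s, u s ∈ parityCheckCode h)
    (hadm : Pairwise fun s s' =>
      Disjoint (componentCoset h (idx s) (u s)) (componentCoset h (idx s') (u s')))
    (σ : ι → Equiv.Perm K) {x y : Fin n → K} (hx : x ∈ switchedCode h idx u σ)
    (hy : y ∈ switchedCode h idx u σ) (hxy : x ≠ y) : 3 ≤ hammingDist x y := by
  rcases hx with hxH | hx <;> rcases hy with hyH | hy
  · exact three_le_hammingDist_of_mem hmin hxH.1 hyH.1 hxy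
  · obtain ⟨s, y₀, hy₀, rfl⟩ := Set.mem_iUnion.mp hy
    rw [hammingDist_comm]
    exact three_le_hammingDist_applyAt_of_mem_sdiff hmin hcover hu hy₀ hxH (σ s)
  · obtain ⟨s, x₀, hx₀, rfl⟩ := Set.mem_iUnion.mp hx
    exact three_le_hammingDist_applyAt_of_mem_sdiff hmin hcover hu hx₀ hyH (σ s)
  · obtain ⟨s, x₀, hx₀, rfl⟩ := Set.mem_iUnion.mp hx
    obtain ⟨s', y₀, hy₀, rfl⟩ := Set.mem_iUnion.mp hy
    by_cases hss' : s = s'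
    · subst hss'
      rw [hammingDist_applyAt]
      exact three_le_hammingDist_of_mem hmin (componentCoset_subset_parityCheckCode (hu s) hx₀)
        (componentCoset_subset_parityCheckCode (hu s) hy₀) fun hxy₀ => hxy (hxy₀ ▸ rfl)
    · exact three_le_hammingDist_applyAt_of_disjoint hmin hcover (hu s) (hu s') (hadm hss')
        hx₀ hy₀ (σ s) (σ s')

theorem ncard_switchedCode [Fintype K]
    (hmin : ∀ v ∈ parityCheckCode h, v ≠ 0 → 3 ≤ hammingNorm v)
    (hcover : ∀ z : Fin m → K, z ≠ 0 → ∃ j, ∃ c : K, z = c • h j)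
    (hu : ∀ s, u s ∈ parityCheckCode h)
    (hadm : Pairwise fun s s' =>
      Disjoint (componentCoset h (idx s) (u s)) (componentCoset h (idx s') (u s')))
    (σ : ι → Equiv.Perm K) :
    (switchedCode h idx u σ).ncard = Fintype.card K ^ (n - m) := by
  set H : Set (Fin n → K) := (parityCheckCode h : Set (Fin n → K))
  set C : ι → Set (Fin n → K) := fun s => componentCoset h (idx s) (u s)
  set B : ι → Set (Fin n → K) := fun s => applyAt (idx s) (σ s) '' C s
  have hne {x y : Fin n → K} (hxy : 3 ≤ hammingDist x y) : x ≠ y :=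
    hammingDist_pos.mp (by omega)
  have hAB : Disjoint (H \ ⋃ s, C s) (⋃ s, B s) := by
    refine Set.disjoint_iff_forall_ne.mpr fun y hy x hx => ?_
    obtain ⟨s, x₀, hx₀, rfl⟩ := Set.mem_iUnion.mp hx
    exact (hne (three_le_hammingDist_applyAt_of_mem_sdiff hmin hcover hu hx₀ hy (σ s))).symm
  have hB : Pairwise fun s s' => Disjoint (B s) (B s') := by
    intro s s' hss'
    refine Set.disjoint_iff_forall_ne.mpr ?_
    rintro _ ⟨x₀, hx₀, rfl⟩ _ ⟨y₀, hy₀, rfl⟩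
    exact hne (three_le_hammingDist_applyAt_of_disjoint hmin hcover (hu s) (hu s') (hadm hss')
      hx₀ hy₀ (σ s) (σ s'))
  have hBC : (⋃ s, B s).ncard = (⋃ s, C s).ncard := by
    rw [← Nat.card_coe_set_eq, ← Nat.card_coe_set_eq]
    exact Nat.card_congr <| (Set.unionEqSigmaOfDisjoint hB).trans <|
      (Equiv.sigmaCongrRight fun s => (Equiv.Set.image _ _ (applyAt_injective _ _)).symm).trans
        (Set.unionEqSigmaOfDisjoint hadm).symm
  have hCH : ⋃ s, C s ⊆ H :=
    Set.iUnion_subset fun s => componentCoset_subset_parityCheckCode (hu s)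
  have hH : H.ncard = Fintype.card K ^ (n - m) := by
    rw [← Nat.card_coe_set_eq]
    exact card_parityCheckCode hcover
  rw [switchedCode, Set.ncard_union_eq hAB, Set.ncard_sdiff hCH, hBC, ← hH]
  have := Set.ncard_le_ncard hCH
  omega

end SwitchedCode

end HammingCode

theorem switching_admissible_family_general
    (h : Fin n → Fin m → F)
    (hnz : ∀ j, h j ≠ 0)
    (hnp : ∀ j k, j ≠ k → ∀ c : F, h j ≠ c • h k)
    (hcover : ∀ z : Fin m → F, z ≠ 0 → ∃ j, ∃ c : F, z = c • h j)
    {t : ℕ} (idx : Fin t → Fin n) (u : Fin t → (Fin n → F))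
    (hu : ∀ s, u s ∈ parityCheckCode h)
    (hadm : ∀ s s', s ≠ s' →
      Disjoint (componentCoset h (idx s) (u s)) (componentCoset h (idx s') (u s')))
    (σ : Fin t → Equiv.Perm F) :
    (∀ x ∈ (((parityCheckCode h : Set (Fin n → F)) \ ⋃ s, componentCoset h (idx s) (u s)) ∪
             ⋃ s, applyAt (idx s) (σ s) '' componentCoset h (idx s) (u s)),
     ∀ y ∈ (((parityCheckCode h : Set (Fin n → F)) \ ⋃ s, componentCoset h (idx s) (u s)) ∪
             ⋃ s, applyAt (idx s) (σ s) '' componentCoset h (idx s) (u s)),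
       x ≠ y → 3 ≤ hammingDist x y) ∧
    Nat.card (((parityCheckCode h : Set (Fin n → F)) \ ⋃ s, componentCoset h (idx s) (u s)) ∪
             ⋃ s, applyAt (idx s) (σ s) '' componentCoset h (idx s) (u s) : Set (Fin n → F)) =
      Fintype.card F ^ (n - m) := by
  have hmin : ∀ v ∈ parityCheckCode h, v ≠ 0 → 3 ≤ hammingNorm v :=
    fun v hv hv0 => three_le_hammingNorm_of_mem hnz hnp hv hv0
  refine ⟨fun x hx y hy hxy =>
    three_le_hammingDist_of_mem_switchedCode hmin hcover hu hadm σ hx hy hxy, ?_⟩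
  rw [Nat.card_coe_set_eq]
  exact ncard_switchedCode hmin hcover hu hadm σ

/-- switching an admissible family.  If the cosets
`R_{i_1}+u_1, …, R_{i_t}+u_t` (each `u_s ∈ H_{q,m}`) are pairwise disjoint and
`σ_1,…,σ_t` are permutations of `F_q`, then
`C = (H_{q,m} \ ∪_s (R_{i_s}+u_s)) ∪ (∪_s σ_s(R_{i_s}+u_s))` is a `q`-ary
1-perfect code of length `n`: minimum distance at least 3 and `|C| = q^{n−m}`. -/
theorem switching_admissible_family
    (h : Fin n → Fin m → F) (hm : 2 ≤ m)
    (hn : n = (Fintype.card F ^ m - 1) / (Fintype.card F - 1))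
    (hnz : ∀ j, h j ≠ 0)
    (hnp : ∀ j k, j ≠ k → ∀ c : F, h j ≠ c • h k)
    (hcover : ∀ z : Fin m → F, z ≠ 0 → ∃ j, ∃ c : F, z = c • h j)
    {t : ℕ} (idx : Fin t → Fin n) (u : Fin t → (Fin n → F))
    (hu : ∀ s, u s ∈ parityCheckCode h)
    (hadm : ∀ s s', s ≠ s' →
      Disjoint (componentCoset h (idx s) (u s)) (componentCoset h (idx s') (u s')))
    (σ : Fin t → Equiv.Perm F) :
    (∀ x ∈ (((parityCheckCode h : Set (Fin n → F)) \ ⋃ s, componentCoset h (idx s) (u s)) ∪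
             ⋃ s, applyAt (idx s) (σ s) '' componentCoset h (idx s) (u s)),
     ∀ y ∈ (((parityCheckCode h : Set (Fin n → F)) \ ⋃ s, componentCoset h (idx s) (u s)) ∪
             ⋃ s, applyAt (idx s) (σ s) '' componentCoset h (idx s) (u s)),
       x ≠ y → 3 ≤ hammingDist x y) ∧
    Nat.card (((parityCheckCode h : Set (Fin n → F)) \ ⋃ s, componentCoset h (idx s) (u s)) ∪
             ⋃ s, applyAt (idx s) (σ s) '' componentCoset h (idx s) (u s) : Set (Fin n → F)) =
      Fintype.card F ^ (n - m) :=
  switching_admissible_family_general h hnz hnp hcover idx u hu hadm σ
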